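/- Let N ≥ 3, 0 ≤ β < N, 0 ≤ λ ≤ 2, and 2 ≤ p < 2(N-β)/λ (with 2 ≤ p < ∞ when λ = 0). Set s = (λ+2)/4 + (β-N)/(2p) and assume s > 0. Then the Besov–Morrey space 𝒩^{-2s}_{p,β,∞}(ℝ^N) embeds continuously into 𝓛^{-1}_{2,N-λ}(ℝ^N): there exists C > 0 with ‖f‖_{𝓛^{-1}_{2,N-λ}} ≤ C ‖f‖_{𝒩^{-2s}_{p,β,∞}} for all f. -/

import Mathlib

open MeasureTheory Set
open scoped ENNReal

/-- The Gaussian heat kernel on `ℝ^N`. -/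
noncomputable def heatKernel (N : ℕ) (t : ℝ) (x : EuclideanSpace ℝ (Fin N)) : ℝ :=
  (4 * Real.pi * t) ^ (-(N : ℝ) / 2) * Real.exp (-‖x‖ ^ 2 / (4 * t))

/-- Caloric (heat) extension `e^{tΔ}f`. -/
noncomputable def heatExt (N : ℕ) (f : EuclideanSpace ℝ (Fin N) → ℝ) (t : ℝ)
    (x : EuclideanSpace ℝ (Fin N)) : ℝ :=
  ∫ y, heatKernel N t (x - y) * f y

section Aux

lemma heatKernel_cont (N : ℕ) (t : ℝ) : Continuous (heatKernel N t) := by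
  unfold heatKernel
  fun_prop

lemma heatKernel_pos (N : ℕ) {t : ℝ} (ht : 0 < t) (x : EuclideanSpace ℝ (Fin N)) :
    0 < heatKernel N t x := by
  unfold heatKernel
  positivity

lemma heatExt_meas {N : ℕ} {f : EuclideanSpace ℝ (Fin N) → ℝ} (hf : Measurable f) (t : ℝ) :
    Measurable (heatExt N f t) := by
  have h : StronglyMeasurable fun q : (EuclideanSpace ℝ (Fin N)) × (EuclideanSpace ℝ (Fin N)) =>
      heatKernel N t (q.1 - q.2) * f q.2 := by
    apply Measurable.stronglyMeasurable
    exact (((heatKernel_cont N t).measurable.comp measurable_sub)).mul (hf.comp measurable_snd)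
  exact h.integral_prod_right'.measurable

lemma quadineq (a b D ny ny0 nz iy iy0 : ℝ) (ha : 0 < a) (hab : a < b)
    (hny : 0 ≤ ny) (hnz : 0 ≤ nz) (hny0 : 0 ≤ ny0) (hyD : ny ≤ D)
    (hiy : |iy| ≤ ny * nz) (hiy0 : |iy0| ≤ ny0 * nz) :
    a * (ny0 ^ 2 - 2 * iy0 + nz ^ 2) - b * (ny ^ 2 - 2 * iy + nz ^ 2) ≤
      a * ny0 ^ 2 + (2 * (b * D + a * ny0)) ^ 2 / (4 * (b - a)) := by
  have hD : 0 ≤ D := le_trans hny hyD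
  have hε : 0 < b - a := by linarith
  have h1 : iy ≤ ny * nz := (abs_le.mp hiy).2
  have h2 : -iy0 ≤ ny0 * nz := by
    have := (abs_le.mp hiy0).1; linarith
  have hb : 0 < b := lt_trans ha hab
  have key : -(b - a) * nz ^ 2 + 2 * (b * D + a * ny0) * nz
      ≤ (2 * (b * D + a * ny0)) ^ 2 / (4 * (b - a)) := by
    rw [le_div_iff₀ (by positivity)]
    nlinarith [sq_nonneg (2 * (b - a) * nz - 2 * (b * D + a * ny0))]
  nlinarith [mul_le_mul_of_nonneg_left h1 hb.le, mul_le_mul_of_nonneg_left h2 ha.le,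
    mul_le_mul_of_nonneg_right hyD hnz,
    mul_le_mul_of_nonneg_left (mul_le_mul_of_nonneg_right hyD hnz) hb.le]

lemma heatKernel_dom (N : ℕ) {t t2 : ℝ} (ht : 0 < t) (htt : t < t2)
    (y0 : EuclideanSpace ℝ (Fin N)) (D : ℝ) :
    ∃ C > 0, ∀ y : EuclideanSpace ℝ (Fin N), ‖y‖ ≤ D → ∀ z,
      heatKernel N t (y - z) ≤ C * heatKernel N t2 (y0 - z) := by
  have ht2 : 0 < t2 := lt_trans ht htt
  set a : ℝ := 1 / (4 * t2) with ha_def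
  set b : ℝ := 1 / (4 * t) with hb_def
  have ha : 0 < a := by positivity
  have hab : a < b := by
    rw [ha_def, hb_def]
    apply one_div_lt_one_div_of_lt <;> linarith
  set Q : ℝ := a * ‖y0‖ ^ 2 + (2 * (b * D + a * ‖y0‖)) ^ 2 / (4 * (b - a)) with hQ
  refine ⟨(4 * Real.pi * t) ^ (-(N : ℝ) / 2) / (4 * Real.pi * t2) ^ (-(N : ℝ) / 2) *
    Real.exp Q, by positivity, ?_⟩
  intro y hy z
  unfold heatKernel
  have hP2 : (0:ℝ) < (4 * Real.pi * t2) ^ (-(N : ℝ) / 2) := by positivity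
  have hmain : Real.exp (-‖y - z‖ ^ 2 / (4 * t)) ≤
      Real.exp Q * Real.exp (-‖y0 - z‖ ^ 2 / (4 * t2)) := by
    rw [← Real.exp_add, Real.exp_le_exp]
    have hexp : -‖y - z‖ ^ 2 / (4 * t) = -(b * ‖y - z‖ ^ 2) := by
      rw [hb_def]; field_simp
    have hexp2 : -‖y0 - z‖ ^ 2 / (4 * t2) = -(a * ‖y0 - z‖ ^ 2) := by
      rw [ha_def]; field_simp
    rw [hexp, hexp2]
    have e1 : ‖y - z‖ ^ 2 = ‖y‖ ^ 2 - 2 * inner ℝ y z + ‖z‖ ^ 2 := @norm_sub_sq_real _ _ _ y z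
    have e2 : ‖y0 - z‖ ^ 2 = ‖y0‖ ^ 2 - 2 * inner ℝ y0 z + ‖z‖ ^ 2 := @norm_sub_sq_real _ _ _ y0 z
    have h := quadineq a b D ‖y‖ ‖y0‖ ‖z‖ (inner ℝ y z) (inner ℝ y0 z) ha hab (norm_nonneg _)
      (norm_nonneg _) (norm_nonneg _) hy (abs_real_inner_le_norm y z) (abs_real_inner_le_norm y0 z)
    rw [e1, e2]
    rw [hQ]
    linarith
  have hrw : (4 * Real.pi * t) ^ (-(N : ℝ) / 2) / (4 * Real.pi * t2) ^ (-(N : ℝ) / 2) *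
        Real.exp Q * ((4 * Real.pi * t2) ^ (-(N : ℝ) / 2) * Real.exp (-‖y0 - z‖ ^ 2 / (4 * t2)))
      = (4 * Real.pi * t) ^ (-(N : ℝ) / 2) *
        (Real.exp Q * Real.exp (-‖y0 - z‖ ^ 2 / (4 * t2))) := by
    field_simp
  rw [hrw]
  exact mul_le_mul_of_nonneg_left hmain (by positivity)

lemma holder_on_set {α : Type*} [MeasurableSpace α] (μ : Measure α) {u : α → ℝ}
    (hu : Measurable u) {p B : ℝ} (hp : 2 ≤ p) {s : Set α}
    (hμs : μ s ≠ ⊤) (hbd : ∀ y ∈ s, |u y| ≤ B) :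
    ∫ y in s, u y ^ 2 ∂μ ≤
      (∫ y in s, |u y| ^ p ∂μ) ^ (2 / p) * (μ s).toReal ^ (1 - 2 / p) := by
  have hp0 : (0:ℝ) < p := by linarith
  set w : α → ℝ≥0∞ := fun y => ENNReal.ofReal |u y| with hw
  have hwm : Measurable w := hu.abs.ennreal_ofReal
  have key2 : ∀ y, ENNReal.ofReal (u y ^ 2) = w y ^ (2:ℝ) := by
    intro y
    have h2 : u y ^ 2 = |u y| ^ (2:ℝ) := by
      rw [show (2:ℝ) = ((2:ℕ):ℝ) by norm_num, Real.rpow_natCast, sq_abs]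
    rw [h2, hw]
    exact (ENNReal.ofReal_rpow_of_nonneg (abs_nonneg _) (by norm_num)).symm
  have keyp : ∀ y, ENNReal.ofReal (|u y| ^ p) = w y ^ p :=
    fun y => (ENNReal.ofReal_rpow_of_nonneg (abs_nonneg _) hp0.le).symm
  have hL2 : ∫ y in s, u y ^ 2 ∂μ = (∫⁻ y in s, w y ^ (2:ℝ) ∂μ).toReal := by
    rw [integral_eq_lintegral_of_nonneg_ae (Filter.Eventually.of_forall fun y => sq_nonneg _)
      ((hu.pow_const 2).aestronglyMeasurable)]
    congr 1
    exact lintegral_congr fun y => key2 y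
  have hLp : ∫ y in s, |u y| ^ p ∂μ = (∫⁻ y in s, w y ^ p ∂μ).toReal := by
    rw [integral_eq_lintegral_of_nonneg_ae
      (Filter.Eventually.of_forall fun y => Real.rpow_nonneg (abs_nonneg _) p)
      ((hu.abs.pow_const p).aestronglyMeasurable)]
    congr 1
    exact lintegral_congr fun y => keyp y
  have hLp_fin : ∫⁻ y in s, w y ^ p ∂μ ≤ ENNReal.ofReal (B ^ p) * μ s := by
    calc ∫⁻ y in s, w y ^ p ∂μ ≤ ∫⁻ _ in s, ENNReal.ofReal (B ^ p) ∂μ := by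
          apply setLIntegral_mono measurable_const
          intro y hy
          rw [← keyp y]
          exact ENNReal.ofReal_le_ofReal
            (Real.rpow_le_rpow (abs_nonneg _) (hbd y hy) hp0.le)
      _ = ENNReal.ofReal (B ^ p) * μ s := by
          rw [setLIntegral_const, mul_comm]
  have hLp_ne_top : ∫⁻ y in s, w y ^ p ∂μ ≠ ⊤ :=
    ne_top_of_le_ne_top (ENNReal.mul_ne_top ENNReal.ofReal_ne_top hμs) hLp_fin
  have holder : ∫⁻ y in s, w y ^ (2:ℝ) ∂μ ≤
      (∫⁻ y in s, w y ^ p ∂μ) ^ (2 / p) * (μ s) ^ (1 - 2 / p) := by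
    rcases eq_or_lt_of_le hp with hp2 | hp2
    · rw [← hp2]
      norm_num
    · set q : ℝ := (p/2) / (p/2 - 1) with hq
      have hpq : (p/2).HolderConjugate q :=
        Real.HolderConjugate.conjExponent (by linarith)
      have h := ENNReal.lintegral_mul_le_Lp_mul_Lq (μ.restrict s) hpq
        ((hwm.pow_const (2:ℝ)).aemeasurable) aemeasurable_const
        (f := fun y => w y ^ (2:ℝ)) (g := fun _ => 1)
      simp only [mul_one, Pi.mul_apply] at h
      have e1 : ∀ y, (w y ^ (2:ℝ)) ^ (p/2) = w y ^ p := by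
        intro y
        rw [← ENNReal.rpow_mul]
        congr 1
        field_simp
      have e2 : ∫⁻ y in s, (1:ℝ≥0∞) ^ q ∂μ = μ s := by
        simp
      have e3 : (1:ℝ) / (p/2) = 2 / p := by field_simp
      have e4 : (1:ℝ) / q = 1 - 2 / p := by
        rw [hq]
        field_simp
      calc ∫⁻ y in s, w y ^ (2:ℝ) ∂μ
          ≤ (∫⁻ y in s, (w y ^ (2:ℝ)) ^ (p/2) ∂μ) ^ (1/(p/2)) *
            (∫⁻ y in s, (1:ℝ≥0∞) ^ q ∂μ) ^ (1/q) := h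
        _ = (∫⁻ y in s, w y ^ p ∂μ) ^ (2/p) * (μ s) ^ (1 - 2/p) := by
            rw [e2, e3, e4]
            congr 2
            exact lintegral_congr fun y => e1 y
  rw [hL2, hLp]
  calc (∫⁻ y in s, w y ^ (2:ℝ) ∂μ).toReal
      ≤ ((∫⁻ y in s, w y ^ p ∂μ) ^ (2/p) * (μ s) ^ (1 - 2/p)).toReal := by
        apply ENNReal.toReal_mono _ holder
        exact ENNReal.mul_ne_top (ENNReal.rpow_ne_top_of_nonneg (by positivity) hLp_ne_top)
          (ENNReal.rpow_ne_top_of_nonneg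
            (by linarith [div_le_one_of_le₀ (by linarith : 2 ≤ p) hp0.le] : 0 ≤ 1 - 2/p) hμs)
    _ = (∫⁻ y in s, w y ^ p ∂μ).toReal ^ (2/p) * (μ s).toReal ^ (1 - 2/p) := by
        rw [ENNReal.toReal_mul, ENNReal.toReal_rpow, ENNReal.toReal_rpow]

end Aux

/-- Continuous embedding `𝒩^{-2s}_{p,β,∞}(ℝ^N) ⊂ 𝓛^{-1}_{2,N-λ}(ℝ^N)` for
`N ≥ 3`, `0 ≤ β < N`, `0 ≤ λ ≤ 2`, `2 ≤ p < 2(N-β)/λ` (`p < ∞` if `λ = 0`), and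
`s = (λ+2)/4 + (β-N)/(2p) > 0`.  The Besov–Morrey norm is encoded via the caloric
characterization `sup_{t>0} t^s ‖e^{tΔ}f‖_{M_{p,β}} ≤ M`, and the `𝓛^{-1}_{2,N-λ}`
norm via the Carleson-type bound on the heat extension. -/
theorem stmt5 (N : ℕ) (hN : 3 ≤ N) (β lam p : ℝ)
    (hβ0 : 0 ≤ β) (hβN : β < N) (hlam0 : 0 ≤ lam) (hlam2 : lam ≤ 2)
    (hp2 : 2 ≤ p) (hpu : 0 < lam → p < 2 * ((N : ℝ) - β) / lam)
    (hs : 0 < (lam + 2) / 4 + (β - (N : ℝ)) / (2 * p)) :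
    ∃ C > 0, ∀ f : EuclideanSpace ℝ (Fin N) → ℝ, Measurable f → ∀ M : ℝ,
      (∀ t, 0 < t → ∀ x r, 0 < r →
        t ^ ((lam + 2) / 4 + (β - (N : ℝ)) / (2 * p)) *
          (r ^ (-(β / p)) *
            (∫ y in Metric.ball x r, |heatExt N f t y| ^ p) ^ (1 / p)) ≤ M) →
      ∀ x R, 0 < R →
        (∫ t in Set.Ioc 0 (R ^ 2), ∫ y in Metric.ball x R, (heatExt N f t y) ^ 2)
          ≤ (C * M) ^ 2 *
            (volume (Metric.ball x R)).toReal ^ (1 - lam / (N : ℝ)) := by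
  classical
  have hp0 : (0:ℝ) < p := by linarith
  have hN0 : (0:ℝ) < (N:ℝ) := by positivity
  haveI : Nonempty (Fin N) := ⟨⟨0, by omega⟩⟩
  haveI : Nontrivial (EuclideanSpace ℝ (Fin N)) := by
    refine ⟨0, EuclideanSpace.single ⟨0, by omega⟩ 1, fun h => ?_⟩
    have := congrArg (fun v : EuclideanSpace ℝ (Fin N) => v ⟨0, by omega⟩) h.symm
    simp [EuclideanSpace.single_apply] at this
  set sE : ℝ := (lam + 2) / 4 + (β - (N : ℝ)) / (2 * p) with hsE
  have hkey : p * lam < 2 * ((N:ℝ) - β) := by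
    rcases eq_or_lt_of_le hlam0 with h0 | h0
    · rw [← h0]; nlinarith
    · exact (lt_div_iff₀ h0).mp (hpu h0)
  have hs1 : 2 * sE < 1 := by
    have e : 2 * sE - 1 = (p * lam - 2 * ((N:ℝ) - β)) / (2 * p) := by
      rw [hsE]; field_simp; ring
    have : 2 * sE - 1 < 0 := by
      rw [e]; exact div_neg_of_neg_of_pos (by linarith) (by positivity)
    linarith
  have hs0 : 0 < sE := hs
  set cN : ℝ := (volume (Metric.ball (0 : EuclideanSpace ℝ (Fin N)) 1)).toReal with hcN_def
  have hcN : 0 < cN :=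
    ENNReal.toReal_pos (Metric.measure_ball_pos volume _ one_pos).ne' measure_ball_lt_top.ne
  set C : ℝ := Real.sqrt (cN ^ (lam/(N:ℝ) - 2/p) / (1 - 2*sE)) with hC_def
  have hden : 0 < 1 - 2*sE := by linarith
  have hqpos : 0 < cN ^ (lam/(N:ℝ) - 2/p) / (1 - 2*sE) :=
    div_pos (Real.rpow_pos_of_pos hcN _) hden
  have hCpos : 0 < C := Real.sqrt_pos.mpr hqpos
  have hC2 : C^2 = cN ^ (lam/(N:ℝ) - 2/p) / (1 - 2*sE) := Real.sq_sqrt hqpos.le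
  refine ⟨C, hCpos, ?_⟩
  intro f hf M hyp x R hR
  have hM : 0 ≤ M := by
    refine le_trans ?_ (hyp 1 one_pos x 1 one_pos)
    have hJ0 : 0 ≤ (∫ y in Metric.ball x 1, |heatExt N f 1 y| ^ p) :=
      integral_nonneg fun y => Real.rpow_nonneg (abs_nonneg _) p
    have := Real.rpow_nonneg hJ0 (1/p)
    positivity
  -- volume of the ball
  set V : ℝ := (volume (Metric.ball x R)).toReal with hV_def
  have hVpos : 0 < V :=
    ENNReal.toReal_pos (Metric.measure_ball_pos volume x hR).ne' measure_ball_lt_top.ne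
  have hball : V = R ^ ((N:ℕ):ℝ) * cN := by
    rw [hV_def, Measure.addHaar_ball volume x hR.le, ENNReal.toReal_mul,
      ENNReal.toReal_ofReal (by positivity), finrank_euclideanSpace_fin,
      ← Real.rpow_natCast R N]
  -- the exceptional set of times
  set A : Set ℝ :=
    {t | 0 < t ∧ ∃ y, Integrable (fun z => heatKernel N t (y - z) * f z)} with hA_def
  have hbadnull : volume {t | t ∈ A ∧ ∀ t' ∈ A, t' ≤ t} = 0 := by
    apply Set.Subsingleton.measure_zero
    intro t1 h1 t2 h2
    exact le_antisymm (h2.2 t1 h1.1) (h1.2 t2 h2.1)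
  set Kc : ℝ := M^2 * R^(2*(β/p)) * V^(1-2/p) with hKc_def
  have hKc0 : 0 ≤ Kc := by positivity
  -- pointwise in t estimate
  have hpt : ∀ t, t ∈ Set.Ioc (0:ℝ) (R^2) → ¬(t ∈ A ∧ ∀ t' ∈ A, t' ≤ t) →
      (∫ y in Metric.ball x R, (heatExt N f t y)^2) ≤ Kc * t^(-(2*sE)) := by
    intro t ht htb
    have ht0 : 0 < t := ht.1
    by_cases hcase : ∃ t2 ∈ A, t < t2
    · obtain ⟨t2, ht2A, htt2⟩ := hcase
      obtain ⟨ht2pos, y0, hIy0⟩ := ht2A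
      obtain ⟨C0, hC0pos, hdom⟩ := heatKernel_dom N ht0 htt2 y0 (‖x‖ + R)
      have hmaj : Integrable (fun z => C0 * |heatKernel N t2 (y0 - z) * f z|) :=
        hIy0.abs.const_mul C0
      set B : ℝ := ∫ z, C0 * |heatKernel N t2 (y0 - z) * f z| with hB_def
      have hbd : ∀ y ∈ Metric.ball x R, |heatExt N f t y| ≤ B := by
        intro y hy
        have hyn : ‖y‖ ≤ ‖x‖ + R := by
          have hd : dist y x < R := Metric.mem_ball.mp hy
          have : ‖y‖ ≤ ‖x‖ + ‖y - x‖ := by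
            calc ‖y‖ = ‖x + (y - x)‖ := by congr 1; abel
              _ ≤ ‖x‖ + ‖y - x‖ := norm_add_le _ _
          rw [← dist_eq_norm] at this
          linarith
        have hptw : ∀ z, ‖heatKernel N t (y - z) * f z‖ ≤
            C0 * |heatKernel N t2 (y0 - z) * f z| := by
          intro z
          rw [Real.norm_eq_abs, abs_mul, abs_mul, abs_of_pos (heatKernel_pos N ht0 _),
            abs_of_pos (heatKernel_pos N ht2pos _), ← mul_assoc]
          exact mul_le_mul_of_nonneg_right (hdom y hyn z) (abs_nonneg _)
        have hInt : Integrable (fun z => heatKernel N t (y - z) * f z) := by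
          apply Integrable.mono' hmaj
          · exact (((heatKernel_cont N t).measurable.comp
              (measurable_const.sub measurable_id)).mul hf).aestronglyMeasurable
          · exact Filter.Eventually.of_forall hptw
        calc |heatExt N f t y| = ‖∫ z, heatKernel N t (y - z) * f z‖ := by
              rw [Real.norm_eq_abs]; rfl
          _ ≤ ∫ z, ‖heatKernel N t (y - z) * f z‖ := norm_integral_le_integral_norm _
          _ ≤ B := integral_mono hInt.norm hmaj hptw
      have hμs : volume (Metric.ball x R) ≠ ⊤ := measure_ball_lt_top.ne
      have hhold := holder_on_set volume (heatExt_meas hf t) hp2 hμs hbd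
      set J : ℝ := ∫ y in Metric.ball x R, |heatExt N f t y| ^ p with hJ_def
      have hJ0 : 0 ≤ J := integral_nonneg fun y => Real.rpow_nonneg (abs_nonneg _) p
      have hts : 0 < t ^ sE := Real.rpow_pos_of_pos ht0 _
      have hRb : 0 < R ^ (β/p) := Real.rpow_pos_of_pos hR _
      have hhyp := hyp t ht0 x R hR
      rw [Real.rpow_neg hR.le] at hhyp
      have hJp : J ^ (1/p) ≤ (t ^ sE)⁻¹ * R ^ (β/p) * M := by
        have h1 : J ^ (1/p) = (t^sE)⁻¹ * R^(β/p) *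
            (t^sE * ((R^(β/p))⁻¹ * J^(1/p))) := by
          field_simp
        rw [h1]
        exact mul_le_mul_of_nonneg_left hhyp (by positivity)
      have hsq : J ^ (2/p) ≤ ((t ^ sE)⁻¹ * R ^ (β/p) * M)^2 := by
        have e : J ^ (2/p) = (J ^ (1/p))^2 := by
          rw [← Real.rpow_natCast (J ^ (1/p)) 2, ← Real.rpow_mul hJ0]
          congr 1
          push_cast
          ring
        rw [e]
        exact pow_le_pow_left₀ (Real.rpow_nonneg hJ0 _) hJp 2
      have hVexp : (0:ℝ) ≤ V ^ (1 - 2/p) := Real.rpow_nonneg hVpos.le _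
      calc ∫ y in Metric.ball x R, (heatExt N f t y)^2
          ≤ J ^ (2/p) * V ^ (1-2/p) := hhold
        _ ≤ ((t ^ sE)⁻¹ * R ^ (β/p) * M)^2 * V ^ (1-2/p) :=
            mul_le_mul_of_nonneg_right hsq hVexp
        _ = Kc * t^(-(2*sE)) := by
            have h1 : ((t^sE)⁻¹)^2 = t^(-(2*sE)) := by
              rw [← Real.rpow_neg ht0.le, ← Real.rpow_natCast (t^(-sE)) 2,
                ← Real.rpow_mul ht0.le]
              congr 1
              push_cast
              ring
            have h2 : (R^(β/p))^2 = R^(2*(β/p)) := by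
              rw [← Real.rpow_natCast (R^(β/p)) 2, ← Real.rpow_mul hR.le]
              congr 1
              push_cast
              ring
            rw [hKc_def, mul_pow, mul_pow, h1, h2]
            ring
    · push_neg at hcase
      have htA : t ∉ A := fun h => htb ⟨h, hcase⟩
      have hzero : ∀ y, heatExt N f t y = 0 := by
        intro y
        exact integral_undef (fun hint => htA ⟨ht0, ⟨y, hint⟩⟩)
      have : (∫ y in Metric.ball x R, (heatExt N f t y)^2) = 0 := by
        simp [hzero]
      rw [this]
      positivity
  -- integrate in t
  have hg_int : IntegrableOn (fun t : ℝ => Kc * t^(-(2*sE))) (Set.Ioc 0 (R^2)) := by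
    have h1 : IntervalIntegrable (fun t : ℝ => t ^ (-(2*sE))) volume 0 (R^2) :=
      intervalIntegral.intervalIntegrable_rpow' (by linarith)
    rw [intervalIntegrable_iff, uIoc_of_le (by positivity : (0:ℝ) ≤ R^2)] at h1
    exact h1.const_mul Kc
  have hFae : ∀ᵐ t ∂(volume.restrict (Set.Ioc (0:ℝ) (R^2))),
      (∫ y in Metric.ball x R, (heatExt N f t y)^2) ≤ Kc * t^(-(2*sE)) := by
    have hnb : ∀ᵐ t ∂(volume : Measure ℝ), ¬(t ∈ A ∧ ∀ t' ∈ A, t' ≤ t) := by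
      rw [ae_iff]
      simpa [not_not] using hbadnull
    filter_upwards [ae_restrict_mem measurableSet_Ioc, ae_restrict_of_ae hnb] with t h1 h2
    exact hpt t h1 h2
  have hmono := integral_mono_of_nonneg
    (Filter.Eventually.of_forall fun t => integral_nonneg fun y => sq_nonneg _)
    hg_int hFae
  have hgval : (∫ t in Set.Ioc (0:ℝ) (R^2), Kc * t^(-(2*sE)))
      = Kc * (((R^2 : ℝ)) ^ (1 - 2*sE) / (1 - 2*sE)) := by
    rw [MeasureTheory.integral_const_mul]
    congr 1
    rw [← intervalIntegral.integral_of_le (by positivity : (0:ℝ) ≤ R^2),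
      integral_rpow (Or.inl (by linarith : (-1:ℝ) < -(2*sE))),
      Real.zero_rpow (by linarith : -(2*sE) + 1 ≠ 0)]
    rw [show -(2*sE) + 1 = 1 - 2*sE by ring]
    rw [sub_zero]
  -- final algebra
  have hfinal : Kc * (((R^2 : ℝ)) ^ (1 - 2*sE) / (1 - 2*sE)) = (C*M)^2 * V ^ (1 - lam/(N:ℝ)) := by
    have hRN : (0:ℝ) < R ^ ((N:ℕ):ℝ) := Real.rpow_pos_of_pos hR _
    have hR2 : ((R^2 : ℝ)) ^ (1 - 2*sE) = R ^ (2*(1-2*sE)) := by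
      rw [← Real.rpow_natCast R 2, ← Real.rpow_mul hR.le]
      norm_num
    have hVsplit1 : V ^ (1 - 2/p) = R ^ (((N:ℕ):ℝ)*(1-2/p)) * cN ^ (1-2/p) := by
      rw [hball, Real.mul_rpow hRN.le hcN.le, ← Real.rpow_mul hR.le]
    have hVsplit2 : V ^ (1 - lam/(N:ℝ)) = R ^ (((N:ℕ):ℝ)*(1-lam/(N:ℝ))) * cN ^ (1-lam/(N:ℝ)) := by
      rw [hball, Real.mul_rpow hRN.le hcN.le, ← Real.rpow_mul hR.le]
    have hRexp : 2*(β/p) + (((N:ℕ):ℝ)*(1-2/p) + 2*(1-2*sE)) = ((N:ℕ):ℝ)*(1-lam/(N:ℝ)) := by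
      rw [hsE]
      field_simp
      ring
    have hcNexp : cN ^ (lam/(N:ℝ) - 2/p) * cN ^ (1-lam/(N:ℝ)) = cN ^ ((1:ℝ)-2/p) := by
      rw [← Real.rpow_add hcN]
      congr 1
      ring
    rw [hKc_def, hR2, hVsplit1, mul_pow, hC2, hVsplit2]
    rw [show M^2 * R^(2*(β/p)) * (R^(((N:ℕ):ℝ)*(1-2/p)) * cN^(1-2/p)) * (R^(2*(1-2*sE)) / (1-2*sE))
        = M^2 * cN^(1-2/p) / (1-2*sE) *
          (R^(2*(β/p)) * R^(((N:ℕ):ℝ)*(1-2/p)) * R^(2*(1-2*sE))) by ring]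
    rw [← Real.rpow_add hR, ← Real.rpow_add hR, show 2*(β/p) + ((N:ℕ):ℝ)*(1-2/p) + 2*(1-2*sE)
        = 2*(β/p) + (((N:ℕ):ℝ)*(1-2/p) + 2*(1-2*sE)) by ring, hRexp]
    rw [show cN ^ (lam/(N:ℝ) - 2/p) / (1 - 2*sE) * M^2 *
        (R ^ (((N:ℕ):ℝ)*(1-lam/(N:ℝ))) * cN ^ (1-lam/(N:ℝ)))
        = M^2 * (cN ^ (lam/(N:ℝ) - 2/p) * cN ^ (1-lam/(N:ℝ))) / (1-2*sE) *
          R ^ (((N:ℕ):ℝ)*(1-lam/(N:ℝ))) by ring, hcNexp]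
  calc (∫ t in Set.Ioc (0:ℝ) (R^2), ∫ y in Metric.ball x R, (heatExt N f t y)^2)
      ≤ ∫ t in Set.Ioc (0:ℝ) (R^2), Kc * t^(-(2*sE)) := hmono
    _ = (C*M)^2 * V ^ (1 - lam/(N:ℝ)) := by rw [hgval, hfinal]
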